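/- Let ν : [0,b] → ℂ be integrable, p_ν := Im ν, q_ν := −Re ν, and let Q_ν be the Dirac potential with rows (p_ν, q_ν) and (q_ν, −p_ν). Fix λ ∈ ℂ and let U_ν : [0,b] → M₂ be absolutely continuous with B·U_ν′(x) + Q_ν(x)·U_ν(x) = λ·U_ν(x) for almost every x and U_ν(0) = I. Let A be the 2×2 matrix with rows (i, −i) and (1, 1), σ₃ the diagonal matrix diag(1, −1), and Q_ZS(x) the 2×2 matrix with rows (0, ν(x)) and (conj(ν(x)), 0). Then Z(x) := A⁻¹·U_ν(x)·A is absolutely continuous, Z(0) = I, and Z′(x) = Q_ZS(x)·Z(x) + i·λ·σ₃·Z(x) for almost every x ∈ [0,b]; that is, Z is the fundamental solution of the ZS-AKNS system with potential ν. -/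

import Mathlib

noncomputable section

open MeasureTheory Set Filter Topology Polynomial intervalIntegral

abbrev M2 : Type := Matrix (Fin 2) (Fin 2) ℂ

attribute [local instance] Matrix.normedAddCommGroup Matrix.normedSpace

/-- The matrix `B` of the Dirac system. -/
def Bmat : M2 := !![0, 1; -1, 0]

/-- The Dirac potential built from the scalar functions `p, q`. -/
def diracPot (p q : ℝ → ℂ) : ℝ → M2 := fun x => !![p x, q x; q x, -p x]

/-- Operator norm of a `2 × 2` complex matrix, induced by the Euclidean norm on `ℂ²`. -/
def opNorm (A : M2) : ℝ := ‖Matrix.toEuclideanCLM (𝕜 := ℂ) A‖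

/-- The Legendre polynomial of degree `n` (Rodrigues' formula). -/
def legendreP (n : ℕ) : Polynomial ℝ :=
  ((2 ^ n * n.factorial : ℝ)⁻¹) • (fun r => derivative r)^[n] ((X ^ 2 - 1 : Polynomial ℝ) ^ n)

/-- The domain `Ω⁺ = {(x,t) : 0 ≤ x ≤ b, |t| ≤ x}`. -/
def OmegaPlus (b : ℝ) : Set (ℝ × ℝ) := {z | 0 ≤ z.1 ∧ z.1 ≤ b ∧ |z.2| ≤ z.1}

/-- `K` is a transmutation kernel for the potential `Q` on `Ω⁺`: it satisfies the
hyperbolic PDE `B⬝∂ₓK + ∂ₜK⬝B = -Q⬝K` together with the two Goursat conditions. -/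
def IsTransKernel (b : ℝ) (Q : ℝ → M2) (K : ℝ → ℝ → M2) : Prop :=
  (∀ x t : ℝ, (x, t) ∈ OmegaPlus b →
      Bmat * deriv (fun s => K s t) x + deriv (fun s => K x s) t * Bmat = -(Q x * K x t)) ∧
  (∀ x ∈ Set.Icc (0 : ℝ) b, Bmat * K x x - K x x * Bmat = -Q x) ∧
  (∀ x ∈ Set.Icc (0 : ℝ) b, Bmat * K x (-x) + K x (-x) * Bmat = 0)

/-- The `n`-th Fourier–Legendre coefficient `K_n(x)` of the kernel `K`. -/
def Kcoef (K : ℝ → ℝ → M2) (n : ℕ) (x : ℝ) : M2 :=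
  ((2 * (n : ℝ) + 1) / 2) • ∫ t in (-x)..x, ((legendreP n).eval (t / x)) • K x t

/-- The truncated kernel `K^N(x,t) = Σ_{n=0}^{N} (1/x)·K_n(x)·P_n(t/x)`. -/
def KN (K : ℝ → ℝ → M2) (N : ℕ) (x t : ℝ) : M2 :=
  ∑ n ∈ Finset.range (N + 1), (x⁻¹ * (legendreP n).eval (t / x)) • Kcoef K n x

/-- The free solution `U₀(λ,x)`. -/
def U0 (lam : ℂ) (x : ℝ) : M2 :=
  !![Complex.cos (lam * x), -Complex.sin (lam * x);
     Complex.sin (lam * x), Complex.cos (lam * x)]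

/-- `U(λ,x) = U₀(λ,x) + ∫_{-x}^{x} K(x,t)·U₀(λ,t) dt`. -/
def Umat (K : ℝ → ℝ → M2) (lam : ℂ) (x : ℝ) : M2 :=
  U0 lam x + ∫ t in (-x)..x, K x t * U0 lam t

/-- `U^N(λ,x) = U₀(λ,x) + ∫_{-x}^{x} K^N(x,t)·U₀(λ,t) dt`. -/
def UmatN (K : ℝ → ℝ → M2) (N : ℕ) (lam : ℂ) (x : ℝ) : M2 :=
  U0 lam x + ∫ t in (-x)..x, KN K N x t * U0 lam t

/-- `θ_n(x) = xⁿ·K_n(x)` for `n ≥ 0`, and `θ_{-1}(x) = -K₀(x)/x`. -/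
def theta (K : ℝ → ℝ → M2) (n : ℤ) : ℝ → M2 := fun x =>
  if n = -1 then -(x⁻¹ • Kcoef K 0 x) else (x ^ n.toNat : ℝ) • Kcoef K n.toNat x

/-- The integral operator `S[H](x) = U(x)·∫₀ˣ U(t)⁻¹·Bᵀ·H(t) dt`, where `U = U(0,·)`. -/
def Sop (U : ℝ → M2) (H : ℝ → M2) (x : ℝ) : M2 :=
  U x * ∫ t in (0 : ℝ)..x, (U t)⁻¹ * Bmat.transpose * H t

/-!
Conjugation `M ↦ A⁻¹ M A` by a constant matrix is a continuous linear map, so it commutes with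
integration and `Z` inherits the integral representation `Z x = 1 + ∫₀ˣ A⁻¹ U' A` from `U`.
Since `B² = -1`, the Dirac equation reads `U' = B (Q U - λ U)`; inserting `A A⁻¹ = 1` gives
`Z' = (A⁻¹ B Q A) Z - λ (A⁻¹ B A) Z`, and a direct computation shows `A⁻¹ B A = -i σ₃` and
`A⁻¹ B Q_ν A = Q_ZS`.
-/

theorem ContinuousLinearMap.map_eq_add_intervalIntegral {𝕜 E F : Type*} [RCLike 𝕜]
    [NormedAddCommGroup E] [NormedSpace ℝ E] [NormedSpace 𝕜 E] [CompleteSpace E]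
    [NormedAddCommGroup F] [NormedSpace ℝ F] [NormedSpace 𝕜 F] [CompleteSpace F]
    (L : E →L[𝕜] F) {b : ℝ} {c : E} {U U' : ℝ → E} (hU' : IntegrableOn U' (Icc 0 b))
    (hU : ∀ x ∈ Icc 0 b, U x = c + ∫ t in (0 : ℝ)..x, U' t) :
    ∀ x ∈ Icc 0 b, L (U x) = L c + ∫ t in (0 : ℝ)..x, L (U' t) := by
  intro x hx
  have hint : IntervalIntegrable U' volume 0 x :=
    (intervalIntegrable_iff_integrableOn_Icc_of_le hx.1).2
      (hU'.mono_set (Icc_subset_Icc le_rfl hx.2))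
  rw [hU x hx, map_add, L.intervalIntegral_comp_comm hint]

def mulLeftRightCLM (P Q : M2) : M2 →L[ℂ] M2 :=
  LinearMap.toContinuousLinearMap ((LinearMap.mulRight ℂ Q).comp (LinearMap.mulLeft ℂ P))

theorem conj_deriv_eq_of_mul_add_mul_eq_smul {R : Type*} [Ring R] [Algebra ℂ R]
    {A Ainv B Q U U' : R} (lam : ℂ) (hA : A * Ainv = 1) (hB : B * B = -1)
    (h : B * U' + Q * U = lam • U) :
    Ainv * U' * A
      = (Ainv * (B * Q) * A) * (Ainv * U * A) - lam • ((Ainv * B * A) * (Ainv * U * A)) := by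
  have hU' : U' = B * (Q * U) - lam • (B * U) := by
    calc U' = -(B * B) * U' := by rw [hB, neg_neg, one_mul]
      _ = B * (Q * U - B * U' - Q * U) - lam • (B * U) + B * (lam • U) := by noncomm_ring
      _ = B * (Q * U) - lam • (B * U) := by rw [← h]; noncomm_ring
  have hcancel : ∀ X Y : R, Ainv * X * A * (Ainv * Y * A) = Ainv * (X * Y) * A := by
    intro X Y
    calc Ainv * X * A * (Ainv * Y * A) = Ainv * X * (A * Ainv) * Y * A := by noncomm_ring
      _ = Ainv * (X * Y) * A := by rw [hA, mul_one]; noncomm_ring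
  rw [hcancel, hcancel, hU']
  simp only [mul_sub, sub_mul, mul_smul_comm, smul_mul_assoc, mul_assoc]

def Amat : M2 := !![Complex.I, -Complex.I; 1, 1]

theorem Amat_det : Amat.det = 2 * Complex.I := by
  rw [Amat, Matrix.det_fin_two_of]; ring

theorem Amat_inv_mul : Amat⁻¹ * Amat = 1 := Matrix.nonsing_inv_mul _ (by simp [Amat_det])

theorem Amat_mul_inv : Amat * Amat⁻¹ = 1 := Matrix.mul_nonsing_inv _ (by simp [Amat_det])

theorem Amat_inv : Amat⁻¹ = !![-Complex.I / 2, 1 / 2; Complex.I / 2, 1 / 2] := by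
  refine Matrix.inv_eq_left_inv ?_
  ext i j
  fin_cases i <;> fin_cases j <;> simp [Amat, Complex.ext_iff] <;> norm_num

theorem Bmat_mul_self : Bmat * Bmat = -1 := by
  ext i j
  fin_cases i <;> fin_cases j <;> simp [Bmat]

theorem conj_Bmat : Amat⁻¹ * Bmat * Amat = (-Complex.I) • !![1, 0; 0, -1] := by
  rw [Amat_inv]
  ext i j
  fin_cases i <;> fin_cases j <;> simp [Amat, Bmat, Complex.ext_iff] <;> norm_num

theorem conj_Bmat_mul_diracPot (ν : ℝ → ℂ) (x : ℝ) :
    Amat⁻¹ * (Bmat * diracPot (fun s => ((ν s).im : ℂ)) (fun s => ((-(ν s).re : ℝ) : ℂ)) x)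
        * Amat = !![0, ν x; (starRingEnd ℂ) (ν x), 0] := by
  rw [Amat_inv]
  ext i j
  fin_cases i <;> fin_cases j <;> simp [Amat, Bmat, diracPot, Complex.ext_iff] <;> constructor <;> ring

theorem statement11_general (b : ℝ) (hb : 0 < b) (ν : ℝ → ℂ)
    (lam : ℂ)
    (U U' : ℝ → M2)
    (hU'int : @IntegrableOn ℝ M2 _ _ SeminormedAddGroup.toContinuousENorm U' (Set.Icc 0 b) volume)
    (hUrep : ∀ x ∈ Set.Icc 0 b, U x = 1 + ∫ t in (0 : ℝ)..x, U' t)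
    (hode : ∀ᵐ x ∂(volume : Measure ℝ), x ∈ Set.Icc 0 b →
      Bmat * U' x
          + diracPot (fun s => ((ν s).im : ℂ)) (fun s => ((-(ν s).re : ℝ) : ℂ)) x * U x
        = lam • U x)
    (A : M2) (hA : A = !![Complex.I, -Complex.I; 1, 1])
    (Z : ℝ → M2) (hZ : ∀ x, Z x = A⁻¹ * U x * A) :
    Z 0 = 1 ∧
    ∃ Z' : ℝ → M2, @IntegrableOn ℝ M2 _ _ SeminormedAddGroup.toContinuousENorm Z' (Set.Icc 0 b) volume ∧
      (∀ x ∈ Set.Icc 0 b, Z x = 1 + ∫ t in (0 : ℝ)..x, Z' t) ∧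
      ∀ᵐ x ∂(volume : Measure ℝ), x ∈ Set.Icc 0 b →
        Z' x = !![0, ν x; (starRingEnd ℂ) (ν x), 0] * Z x
          + (Complex.I * lam) • (!![1, 0; 0, -1] * Z x) := by
  obtain rfl : A = Amat := hA
  have hZrep : ∀ x ∈ Icc 0 b, Z x = 1 + ∫ t in (0 : ℝ)..x, Amat⁻¹ * U' t * Amat := by
    intro x hx
    have h : Amat⁻¹ * U x * Amat = Amat⁻¹ * 1 * Amat + ∫ t in (0 : ℝ)..x, Amat⁻¹ * U' t * Amat :=
      (mulLeftRightCLM Amat⁻¹ Amat).map_eq_add_intervalIntegral hU'int hUrep x hx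
    rwa [mul_one, Amat_inv_mul, ← hZ] at h
  refine ⟨?_, fun x => Amat⁻¹ * U' x * Amat,
    (mulLeftRightCLM Amat⁻¹ Amat).integrable_comp hU'int, hZrep, ?_⟩
  · rw [hZrep 0 ⟨le_rfl, hb.le⟩, integral_same, add_zero]
  · filter_upwards [hode] with x hx hxI
    rw [conj_deriv_eq_of_mul_add_mul_eq_smul lam Amat_mul_inv Bmat_mul_self (hx hxI),
      conj_Bmat_mul_diracPot, conj_Bmat, ← hZ, smul_mul_assoc, smul_smul, sub_eq_add_neg,
      ← neg_smul]
    congr 2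
    ring

/-- `Z = A⁻¹·U_ν·A` is the fundamental solution of the ZS-AKNS system. -/
theorem statement11 (b : ℝ) (hb : 0 < b) (ν : ℝ → ℂ)
    (hν : IntegrableOn ν (Set.Icc 0 b)) (lam : ℂ)
    (U U' : ℝ → M2)
    (hU'int : @IntegrableOn ℝ M2 _ _ SeminormedAddGroup.toContinuousENorm U' (Set.Icc 0 b) volume)
    (hUrep : ∀ x ∈ Set.Icc 0 b, U x = 1 + ∫ t in (0 : ℝ)..x, U' t)
    (hode : ∀ᵐ x ∂(volume : Measure ℝ), x ∈ Set.Icc 0 b →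
      Bmat * U' x
          + diracPot (fun s => ((ν s).im : ℂ)) (fun s => ((-(ν s).re : ℝ) : ℂ)) x * U x
        = lam • U x)
    (A : M2) (hA : A = !![Complex.I, -Complex.I; 1, 1])
    (Z : ℝ → M2) (hZ : ∀ x, Z x = A⁻¹ * U x * A) :
    Z 0 = 1 ∧
    ∃ Z' : ℝ → M2, @IntegrableOn ℝ M2 _ _ SeminormedAddGroup.toContinuousENorm Z' (Set.Icc 0 b) volume ∧
      (∀ x ∈ Set.Icc 0 b, Z x = 1 + ∫ t in (0 : ℝ)..x, Z' t) ∧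
      ∀ᵐ x ∂(volume : Measure ℝ), x ∈ Set.Icc 0 b →
        Z' x = !![0, ν x; (starRingEnd ℂ) (ν x), 0] * Z x
          + (Complex.I * lam) • (!![1, 0; 0, -1] * Z x) :=
  statement11_general b hb ν lam U U' hU'int hUrep hode A hA Z hZ
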